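/- arXiv:1709.05613 — 7 statements merged into one kernel-verified Lean document; each statement's English description precedes it below -/
import Mathlib

section
/- For the GLL density f(x;θ,λ,p) = θ^(2+p)/(Γ(1+p)(1+p+λθ)) · (−log x)^p (λ − log x) x^(θ−1) on (0,1), the r-th moment satisfies E[X^r] = θ^(2+p)·((r+θ)λ + (1+p)) / ((r+θ)^(2+p)·(1+p+λθ)) for any real r > −θ. -/
open Real MeasureTheory

/-- The generalized Log-Lindley (GLL) density. -/
noncomputable def gll (θ lam p x : ℝ) : ℝ :=
  θ ^ (2 + p) / (Real.Gamma (1 + p) * (1 + p + lam * θ)) *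
    (-Real.log x) ^ p * (lam - Real.log x) * x ^ (θ - 1)

/-!
Substituting `x = exp (-t)` turns `∫₀¹ x ^ (s - 1) (-log x) ^ q dx` into the Gamma integral
`∫₀^∞ t ^ q e^{-s t} dt = Γ(q + 1) / s ^ (q + 1)`. On `(0, 1)` we have `-log x > 0`, so
`x ^ r` times the GLL density is a combination of two such integrands, with `s = r + θ` and
`q = p, p + 1`; `Γ(p + 2) = (p + 1) Γ(p + 1)` then gives the closed form.
-/

open Set

section ExpNegSubstitution

variable {E : Type*} [NormedAddCommGroup E] [NormedSpace ℝ E]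

lemma image_exp_neg_Ioi : (fun t : ℝ => exp (-t)) '' Ioi 0 = Ioo 0 1 := by
  ext x
  constructor
  · rintro ⟨t, ht, rfl⟩
    exact ⟨exp_pos _, exp_lt_one_iff.mpr (neg_neg_of_pos ht)⟩
  · rintro ⟨hx0, hx1⟩
    exact ⟨-log x, neg_pos.mpr (log_neg hx0 hx1), by simp [exp_log hx0]⟩

lemma hasDerivWithinAt_exp_neg (s : Set ℝ) (t : ℝ) :
    HasDerivWithinAt (fun t : ℝ => exp (-t)) (-exp (-t)) s t := by
  simpa using (hasDerivAt_neg t).exp.hasDerivWithinAt (s := s)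

lemma injective_exp_neg : Function.Injective fun t : ℝ => exp (-t) :=
  exp_injective.comp neg_injective

theorem integrableOn_Ioo_zero_one_iff_exp_neg (g : ℝ → E) :
    IntegrableOn g (Ioo 0 1) ↔ IntegrableOn (fun t => exp (-t) • g (exp (-t))) (Ioi 0) := by
  rw [← image_exp_neg_Ioi, integrableOn_image_iff_integrableOn_abs_deriv_smul measurableSet_Ioi
    (fun t _ => hasDerivWithinAt_exp_neg _ t) injective_exp_neg.injOn]
  simp only [abs_neg, abs_of_pos (exp_pos _)]

theorem integral_Ioo_zero_one_eq_exp_neg (g : ℝ → E) :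
    ∫ x in Ioo 0 1, g x = ∫ t in Ioi 0, exp (-t) • g (exp (-t)) := by
  rw [← image_exp_neg_Ioi, integral_image_eq_integral_abs_deriv_smul measurableSet_Ioi
    (fun t _ => hasDerivWithinAt_exp_neg _ t) injective_exp_neg.injOn]
  simp only [abs_neg, abs_of_pos (exp_pos _)]

end ExpNegSubstitution

section LogGammaIntegral

lemma exp_neg_smul_rpow_mul_neg_log_rpow (s q t : ℝ) :
    exp (-t) • (exp (-t) ^ (s - 1) * (-log (exp (-t))) ^ q) = t ^ q * exp (-(s * t)) := by
  rw [rpow_def_of_pos (exp_pos _), log_exp, neg_neg, smul_eq_mul, ← mul_assoc, ← exp_add,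
    mul_comm]
  congr 2
  ring

variable {s q : ℝ}

theorem integrableOn_rpow_mul_neg_log_rpow (hs : 0 < s) (hq : -1 < q) :
    IntegrableOn (fun x => x ^ (s - 1) * (-log x) ^ q) (Ioo 0 1) := by
  rw [integrableOn_Ioo_zero_one_iff_exp_neg]
  simp_rw [exp_neg_smul_rpow_mul_neg_log_rpow, ← neg_mul]
  simpa using integrableOn_rpow_mul_exp_neg_mul_rpow hq zero_lt_one hs

theorem integral_rpow_mul_neg_log_rpow (hs : 0 < s) (hq : -1 < q) :
    ∫ x in Ioo 0 1, x ^ (s - 1) * (-log x) ^ q = Gamma (q + 1) / s ^ (q + 1) := by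
  rw [integral_Ioo_zero_one_eq_exp_neg]
  simp_rw [exp_neg_smul_rpow_mul_neg_log_rpow]
  have := integral_rpow_mul_exp_neg_mul_Ioi (a := q + 1) (by linarith) hs
  rw [add_sub_cancel_right] at this
  rw [this, div_rpow zero_le_one hs.le, one_rpow, one_div_mul_eq_div]

end LogGammaIntegral

lemma rpow_mul_gll_eq {θ lam p r x : ℝ} (hx : x ∈ Ioo 0 1) :
    x ^ r * gll θ lam p x = θ ^ (2 + p) / (Gamma (1 + p) * (1 + p + lam * θ)) *
      (lam * (x ^ (r + θ - 1) * (-log x) ^ p) + x ^ (r + θ - 1) * (-log x) ^ (p + 1)) := by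
  have hlog : 0 < -log x := neg_pos.mpr (log_neg hx.1 hx.2)
  rw [gll, rpow_add_one hlog.ne', add_sub_assoc, rpow_add hx.1]
  ring

theorem gll_moment_general (θ lam p r : ℝ) (hp : 0 ≤ p)
    (hr : -θ < r) :
    ∫ x in Set.Ioo (0:ℝ) 1, x ^ r * gll θ lam p x =
      θ ^ (2 + p) * ((r + θ) * lam + (1 + p)) / ((r + θ) ^ (2 + p) * (1 + p + lam * θ)) := by
  have hs : 0 < r + θ := by linarith
  have hp₀ : -1 < p := by linarith
  have hp₁ : -1 < p + 1 := by linarith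
  have hΓ : Gamma (1 + p) ≠ 0 := (Gamma_pos_of_pos (by linarith)).ne'
  have hsp : (r + θ) ^ (1 + p) ≠ 0 := (rpow_pos_of_pos hs _).ne'
  have hs_pow : (r + θ) ^ (2 + p) = (r + θ) ^ (1 + p) * (r + θ) := by
    rw [← rpow_add_one hs.ne']
    ring_nf
  rw [setIntegral_congr_fun measurableSet_Ioo fun x hx => rpow_mul_gll_eq hx, integral_const_mul,
    integral_add ((integrableOn_rpow_mul_neg_log_rpow hs hp₀).const_mul lam)
      (integrableOn_rpow_mul_neg_log_rpow hs hp₁),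
    integral_const_mul, integral_rpow_mul_neg_log_rpow hs hp₀,
    integral_rpow_mul_neg_log_rpow hs hp₁, Gamma_add_one (by linarith : 0 < p + 1).ne',
    add_comm p 1, show 1 + p + 1 = 2 + p by ring, hs_pow]
  field_simp

theorem gll_moment (θ lam p r : ℝ) (hθ : 0 < θ) (hlam : 0 ≤ lam) (hp : 0 ≤ p)
    (hr : -θ < r) :
    ∫ x in Set.Ioo (0:ℝ) 1, x ^ r * gll θ lam p x =
      θ ^ (2 + p) * ((r + θ) * lam + (1 + p)) / ((r + θ) ^ (2 + p) * (1 + p + lam * θ)) :=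
  gll_moment_general θ lam p r hp hr
end

section
/- If X has the Log-Lindley density f(x;θ,λ) = θ²/(1+λθ)·(λ − log x)·x^(θ−1) on (0,1), then E[(−log X)^p] = Γ(1+p)·(1+p+λθ) / (θ^p·(1+λθ)) for p ≥ 0. -/
/-!
Substituting `x = exp (-t)` turns the `p`-th moment of `-log X` into the `p`-th moment of a
variable on `(0, ∞)` with density `θ² / (1 + λθ) * (λ + t) * exp (-θt)`, a mixture of the
`Gamma(1, θ)` and `Gamma(2, θ)` densities, whose moments are Euler integrals.
-/

open Real MeasureTheory

/-- The Log-Lindley density. -/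
noncomputable def ll (θ lam x : ℝ) : ℝ :=
  θ ^ 2 / (1 + lam * θ) * (lam - Real.log x) * x ^ (θ - 1)

open Set

theorem integral_Ioo_zero_one_eq_integral_Ioi_exp_neg {E : Type*} [NormedAddCommGroup E]
    [NormedSpace ℝ E] (g : ℝ → E) :
    ∫ x in Ioo 0 1, g x = ∫ t in Ioi 0, exp (-t) • g (exp (-t)) := by
  calc ∫ x in Ioo 0 1, g x = ∫ x in exp '' Iio 0, g x := by rw [image_exp_Iio, exp_zero]
    _ = ∫ u in Iio 0, exp u • g (exp u) := by
      rw [integral_image_eq_integral_abs_deriv_smul measurableSet_Iio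
        (fun u _ => (hasDerivAt_exp u).hasDerivWithinAt) exp_injective.injOn]
      simp only [abs_exp]
    _ = ∫ t in Ioi 0, exp (-t) • g (exp (-t)) := by
      rw [integral_comp_neg_Ioi (f := fun u => exp u • g (exp u)), neg_zero,
        integral_Iic_eq_integral_Iio]

theorem exp_neg_mul_ll_exp_neg (θ lam t : ℝ) :
    exp (-t) * ll θ lam (exp (-t)) = θ ^ 2 / (1 + lam * θ) * (lam + t) * exp (-(θ * t)) := by
  rw [ll, log_exp, rpow_def_of_pos (exp_pos _), log_exp, mul_comm, mul_assoc _ (exp _), ← exp_add]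
  ring_nf

theorem integral_rpow_mul_exp_neg_mul_Ioi_eq_Gamma_div {s r : ℝ} (hs : -1 < s) (hr : 0 < r) :
    ∫ t in Ioi 0, t ^ s * exp (-(r * t)) = Gamma (s + 1) / r ^ (s + 1) := by
  have := integral_rpow_mul_exp_neg_mul_Ioi (a := s + 1) (by linarith) hr
  rwa [add_sub_cancel_right, one_div, inv_rpow hr.le, inv_mul_eq_div] at this

theorem integrableOn_rpow_mul_exp_neg_mul_Ioi {s r : ℝ} (hs : -1 < s) (hr : 0 < r) :
    IntegrableOn (fun t => t ^ s * exp (-(r * t))) (Ioi 0) := by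
  simpa using integrableOn_rpow_mul_exp_neg_mul_rpow hs one_pos hr

theorem integral_Ioi_add_mul_rpow_mul_exp_neg_mul (a : ℝ) {s r : ℝ} (hs : -1 < s) (hr : 0 < r) :
    ∫ t in Ioi 0, (a + t) * t ^ s * exp (-(r * t)) =
      Gamma (s + 1) * (s + 1 + a * r) / r ^ (s + 2) := by
  have hsplit : ∀ t ∈ Ioi (0 : ℝ), (a + t) * t ^ s * exp (-(r * t)) =
      a * (t ^ s * exp (-(r * t))) + t ^ (s + 1) * exp (-(r * t)) := by
    intro t ht
    rw [rpow_add_one (ne_of_gt ht)]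
    ring
  rw [setIntegral_congr_fun measurableSet_Ioi hsplit,
    integral_add ((integrableOn_rpow_mul_exp_neg_mul_Ioi hs hr).const_mul a)
      (integrableOn_rpow_mul_exp_neg_mul_Ioi (by linarith) hr),
    integral_const_mul, integral_rpow_mul_exp_neg_mul_Ioi_eq_Gamma_div hs hr,
    integral_rpow_mul_exp_neg_mul_Ioi_eq_Gamma_div (by linarith) hr, show s + 2 = s + 1 + 1 by ring,
    Gamma_add_one (s := s + 1) (by linarith), rpow_add_one hr.ne' (s + 1)]
  have : r ^ (s + 1) ≠ 0 := by positivity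
  field_simp
  ring

theorem ll_neg_log_moment_general (θ lam p : ℝ) (hθ : 0 < θ) (hp : 0 ≤ p) :
    ∫ x in Set.Ioo (0:ℝ) 1, (-Real.log x) ^ p * ll θ lam x =
      Real.Gamma (1 + p) * (1 + p + lam * θ) / (θ ^ p * (1 + lam * θ)) := by
  have hintegrand : ∀ t ∈ Ioi (0 : ℝ),
      exp (-t) • ((-log (exp (-t))) ^ p * ll θ lam (exp (-t))) =
        θ ^ 2 / (1 + lam * θ) * ((lam + t) * t ^ p * exp (-(θ * t))) := by
    intro t _
    rw [smul_eq_mul, log_exp, neg_neg, mul_left_comm, exp_neg_mul_ll_exp_neg]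
    ring
  rw [integral_Ioo_zero_one_eq_integral_Ioi_exp_neg,
    setIntegral_congr_fun measurableSet_Ioi hintegrand,
    integral_const_mul, integral_Ioi_add_mul_rpow_mul_exp_neg_mul lam (by linarith) hθ,
    rpow_add hθ, rpow_two, add_comm 1 p]
  have : 0 < θ ^ p := by positivity
  field_simp

theorem ll_neg_log_moment (θ lam p : ℝ) (hθ : 0 < θ) (hlam : 0 ≤ lam) (hp : 0 ≤ p) :
    ∫ x in Set.Ioo (0:ℝ) 1, (-Real.log x) ^ p * ll θ lam x =
      Real.Gamma (1 + p) * (1 + p + lam * θ) / (θ ^ p * (1 + lam * θ)) :=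
  ll_neg_log_moment_general θ lam p hθ hp
end

section
/- If X has the GLL density with parameters θ > 0, λ ≥ 0, p ≥ 0, then E[log X] = −(p+1)·(2+p+λθ) / (θ·(1+p+λθ)). -/
open Real MeasureTheory

open Set Filter Asymptotics in
lemma gll_aux_integrable {s r : ℝ} (hs : 0 < s) (hr : 0 < r) :
    IntegrableOn (fun t : ℝ => t ^ s * Real.exp (-(r * t))) (Ioi (0:ℝ)) := by
  apply integrable_of_isBigO_exp_neg (half_pos hr)
  · apply ContinuousOn.mul
    · intro x _
      exact (Real.continuousAt_rpow_const x s (Or.inr hs.le)).continuousWithinAt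
    · exact (Real.continuous_exp.comp (by continuity)).continuousOn
  · have h1 : (fun t : ℝ => t ^ s * Real.exp (-(r/2) * t)) =O[atTop] (fun _ : ℝ => (1:ℝ)) :=
      (tendsto_rpow_mul_exp_neg_mul_atTop_nhds_zero s (r/2) (half_pos hr)).isBigO_one ℝ
    have h2 := h1.mul (isBigO_refl (fun t : ℝ => Real.exp (-(r/2) * t)) atTop)
    refine h2.congr' ?_ ?_
    · filter_upwards with x
      rw [mul_assoc, ← Real.exp_add]
      ring_nf
    · filter_upwards with x
      simp

open Set in
lemma gll_aux_gamma {s r : ℝ} (hs : 0 ≤ s) (hr : 0 < r) :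
    ∫ t in Ioi (0:ℝ), t ^ s * Real.exp (-(r * t)) = (1/r) ^ (s+1) * Real.Gamma (s+1) := by
  have h := integral_rpow_mul_exp_neg_mul_Ioi (a := s+1) (r := r) (by linarith) hr
  rw [← h]
  congr 1 with t
  norm_num

open Set in
lemma gll_aux_subst (g : ℝ → ℝ) :
    ∫ x in Ioo (0:ℝ) 1, g x = ∫ t in Ioi (0:ℝ), Real.exp (-t) * g (Real.exp (-t)) := by
  have himg : (fun t : ℝ => Real.exp (-t)) '' (Ioi 0) = Ioo 0 1 := by
    ext x
    constructor
    · rintro ⟨t, ht, rfl⟩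
      exact ⟨Real.exp_pos _, by rw [Real.exp_lt_one_iff]; simpa using ht⟩
    · rintro ⟨hx0, hx1⟩
      exact ⟨-Real.log x, by simpa using Real.log_neg hx0 hx1, by simp [Real.exp_log hx0]⟩
  have hderiv : ∀ t ∈ Ioi (0:ℝ), HasDerivWithinAt (fun t : ℝ => Real.exp (-t))
      (Real.exp (-t) * (-1)) (Ioi 0) t := by
    intro t _
    exact (((hasDerivAt_id t).neg).exp.congr_deriv (by simp)).hasDerivWithinAt
  have hinj : Set.InjOn (fun t : ℝ => Real.exp (-t)) (Ioi 0) := by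
    intro a _ b _ h
    have := Real.exp_injective h
    linarith [neg_injective this]
  rw [← himg, integral_image_eq_integral_abs_deriv_smul measurableSet_Ioi hderiv hinj g]
  congr 1 with t
  rw [abs_mul, abs_of_pos (Real.exp_pos _)]
  simp [smul_eq_mul]

theorem gll_log_moment (θ lam p : ℝ) (hθ : 0 < θ) (hlam : 0 ≤ lam) (hp : 0 ≤ p) :
    ∫ x in Set.Ioo (0:ℝ) 1, Real.log x * gll θ lam p x =
      -((p + 1) * (2 + p + lam * θ) / (θ * (1 + p + lam * θ))) := by
  set C : ℝ := θ ^ (2 + p) / (Real.Gamma (1 + p) * (1 + p + lam * θ)) with hC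
  rw [gll_aux_subst]
  have hcongr : ∀ t ∈ Set.Ioi (0:ℝ),
      Real.exp (-t) * (Real.log (Real.exp (-t)) * gll θ lam p (Real.exp (-t))) =
      (-(C * lam)) * (t ^ (p+1) * Real.exp (-(θ * t)))
        + (-C) * (t ^ (p+2) * Real.exp (-(θ * t))) := by
    intro t ht
    have ht0 : (0:ℝ) < t := ht
    simp only [gll, Real.log_exp, neg_neg, ← hC]
    rw [Real.rpow_def_of_pos (Real.exp_pos _), Real.log_exp]
    have hE : Real.exp (-t) * Real.exp (-t * (θ - 1)) = Real.exp (-(θ * t)) := by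
      rw [← Real.exp_add]; congr 1; ring
    have h1 : t ^ (p+1) = t ^ p * t := Real.rpow_add_one ht0.ne' p
    have h2 : t ^ (p+2) = t ^ p * t * t := by
      rw [show p + 2 = (p + 1) + 1 by ring, Real.rpow_add_one ht0.ne', h1]
    rw [h1, h2, ← hE]
    ring
  rw [setIntegral_congr_fun measurableSet_Ioi hcongr]
  have hi1 : IntegrableOn (fun t : ℝ => t ^ (p+1) * Real.exp (-(θ * t))) (Set.Ioi 0) :=
    gll_aux_integrable (by linarith) hθ
  have hi2 : IntegrableOn (fun t : ℝ => t ^ (p+2) * Real.exp (-(θ * t))) (Set.Ioi 0) :=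
    gll_aux_integrable (by linarith) hθ
  rw [integral_add (hi1.const_mul _) (hi2.const_mul _), integral_const_mul, integral_const_mul,
    gll_aux_gamma (by linarith) hθ, gll_aux_gamma (by linarith) hθ]
  have hG2 : Real.Gamma (p + 1 + 1) = (p + 1) * Real.Gamma (p + 1) :=
    Real.Gamma_add_one (by positivity)
  have hG3 : Real.Gamma (p + 2 + 1) = (p + 2) * ((p + 1) * Real.Gamma (p + 1)) := by
    rw [Real.Gamma_add_one (by positivity), show p + 2 = p + 1 + 1 by ring, hG2]
  have hGpos : 0 < Real.Gamma (p + 1) := Real.Gamma_pos_of_pos (by positivity)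
  have hDpos : 0 < 1 + p + lam * θ := by nlinarith
  have hA : (1/θ:ℝ) ^ (p+1+1) = (θ ^ (2+p))⁻¹ := by
    rw [one_div, Real.inv_rpow hθ.le, show p+1+1 = 2+p by ring]
  have hB : (1/θ:ℝ) ^ (p+2+1) = (θ ^ (2+p))⁻¹ * θ⁻¹ := by
    rw [one_div, Real.inv_rpow hθ.le, show p+2+1 = (2+p)+1 by ring,
      Real.rpow_add_one hθ.ne', mul_inv]
  have hApos : (0:ℝ) < θ ^ (2+p) := Real.rpow_pos_of_pos hθ _
  rw [hG2, hG3, hA, hB, hC]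
  field_simp
  ring_nf
end

section
/- Let f₁ and f₂ denote the GLL densities with parameters (θ₁,λ₁,p₁) and (θ₂,λ₂,p₂) respectively. If θ₁ ≤ θ₂, λ₁ ≤ λ₂ and p₂ ≤ p₁, then the ratio x ↦ f₂(x)/f₁(x) is non-decreasing on (0,1); equivalently, f₁(x)·f₂(y) ≥ f₁(y)·f₂(x) for all 0 < x ≤ y < 1. -/
open Real MeasureTheory

private lemma gll_aux1 (a b p q : ℝ) (hb : 0 < b) (hab : b ≤ a) (hq : q ≤ p) :
    b ^ p * a ^ q ≤ a ^ p * b ^ q := by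
  have ha : 0 < a := hb.trans_le hab
  have h : b ^ (p - q) ≤ a ^ (p - q) :=
    Real.rpow_le_rpow hb.le hab (sub_nonneg.2 hq)
  have e1 : a ^ p = a ^ q * a ^ (p - q) := by
    rw [← Real.rpow_add ha]; ring_nf
  have e2 : b ^ p = b ^ q * b ^ (p - q) := by
    rw [← Real.rpow_add hb]; ring_nf
  rw [e1, e2]
  have hbq : (0:ℝ) < b ^ q := Real.rpow_pos_of_pos hb q
  have haq : (0:ℝ) < a ^ q := Real.rpow_pos_of_pos ha q
  calc b ^ q * b ^ (p - q) * a ^ q = (b ^ q * a ^ q) * b ^ (p - q) := by ring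
    _ ≤ (b ^ q * a ^ q) * a ^ (p - q) := by
        apply mul_le_mul_of_nonneg_left h (by positivity)
    _ = a ^ q * a ^ (p - q) * b ^ q := by ring

theorem gll_likelihood_ratio_order (θ₁ θ₂ lam₁ lam₂ p₁ p₂ : ℝ)
    (hθ₁ : 0 < θ₁) (hθ₂ : 0 < θ₂) (hlam₁ : 0 ≤ lam₁) (hlam₂ : 0 ≤ lam₂)
    (hp₁ : 0 ≤ p₁) (hp₂ : 0 ≤ p₂)
    (hθ : θ₁ ≤ θ₂) (hlam : lam₁ ≤ lam₂) (hp : p₂ ≤ p₁) :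
    ∀ x y : ℝ, 0 < x → x ≤ y → y < 1 →
      gll θ₁ lam₁ p₁ x * gll θ₂ lam₂ p₂ y ≥ gll θ₁ lam₁ p₁ y * gll θ₂ lam₂ p₂ x := by
  intro x y hx hxy hy1
  have hy : 0 < y := hx.trans_le hxy
  set a := -Real.log x with ha_def
  set b := -Real.log y with hb_def
  have hb : 0 < b := by
    have := Real.log_neg hy hy1
    simp only [hb_def]; linarith
  have hab : b ≤ a := by
    have := Real.log_le_log hx hxy
    simp only [ha_def, hb_def]; linarith
  have ha : 0 < a := hb.trans_le hab
  -- positivity of constants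
  have hC₁ : 0 < θ₁ ^ (2 + p₁) / (Real.Gamma (1 + p₁) * (1 + p₁ + lam₁ * θ₁)) := by
    apply div_pos (Real.rpow_pos_of_pos hθ₁ _)
    apply mul_pos (Real.Gamma_pos_of_pos (by linarith))
    have : 0 ≤ lam₁ * θ₁ := mul_nonneg hlam₁ hθ₁.le
    linarith
  have hC₂ : 0 < θ₂ ^ (2 + p₂) / (Real.Gamma (1 + p₂) * (1 + p₂ + lam₂ * θ₂)) := by
    apply div_pos (Real.rpow_pos_of_pos hθ₂ _)
    apply mul_pos (Real.Gamma_pos_of_pos (by linarith))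
    have : 0 ≤ lam₂ * θ₂ := mul_nonneg hlam₂ hθ₂.le
    linarith
  have h1 : b ^ p₁ * a ^ p₂ ≤ a ^ p₁ * b ^ p₂ := gll_aux1 a b p₁ p₂ hb hab hp
  have h2 : (lam₁ + b) * (lam₂ + a) ≤ (lam₁ + a) * (lam₂ + b) := by
    nlinarith [mul_nonneg (sub_nonneg.2 hlam) (sub_nonneg.2 hab)]
  have h3 : y ^ (θ₁ - 1) * x ^ (θ₂ - 1) ≤ x ^ (θ₁ - 1) * y ^ (θ₂ - 1) := by
    have := gll_aux1 y x (θ₂ - 1) (θ₁ - 1) hx hxy (by linarith)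
    linarith
  have hap₁ : (0:ℝ) < a ^ p₁ := Real.rpow_pos_of_pos ha _
  have hap₂ : (0:ℝ) < a ^ p₂ := Real.rpow_pos_of_pos ha _
  have hbp₁ : (0:ℝ) < b ^ p₁ := Real.rpow_pos_of_pos hb _
  have hbp₂ : (0:ℝ) < b ^ p₂ := Real.rpow_pos_of_pos hb _
  have hx1 : (0:ℝ) < x ^ (θ₁ - 1) := Real.rpow_pos_of_pos hx _
  have hx2 : (0:ℝ) < x ^ (θ₂ - 1) := Real.rpow_pos_of_pos hx _
  have hy1' : (0:ℝ) < y ^ (θ₁ - 1) := Real.rpow_pos_of_pos hy _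
  have hy2 : (0:ℝ) < y ^ (θ₂ - 1) := Real.rpow_pos_of_pos hy _
  have hl1b : (0:ℝ) < lam₁ + b := by linarith
  have hl1a : (0:ℝ) < lam₁ + a := by linarith
  have hl2b : (0:ℝ) < lam₂ + b := by linarith
  have hl2a : (0:ℝ) < lam₂ + a := by linarith
  have key : (b ^ p₁ * a ^ p₂) * ((lam₁ + b) * (lam₂ + a)) * (y ^ (θ₁ - 1) * x ^ (θ₂ - 1))
      ≤ (a ^ p₁ * b ^ p₂) * ((lam₁ + a) * (lam₂ + b)) * (x ^ (θ₁ - 1) * y ^ (θ₂ - 1)) := by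
    apply mul_le_mul (mul_le_mul h1 h2 (by positivity) (by positivity)) h3
      (by positivity) (by positivity)
  have e₁ : gll θ₁ lam₁ p₁ x = θ₁ ^ (2 + p₁) / (Real.Gamma (1 + p₁) * (1 + p₁ + lam₁ * θ₁))
      * (a ^ p₁ * (lam₁ + a) * x ^ (θ₁ - 1)) := by
    simp only [gll, ha_def]; ring_nf
  have e₂ : gll θ₁ lam₁ p₁ y = θ₁ ^ (2 + p₁) / (Real.Gamma (1 + p₁) * (1 + p₁ + lam₁ * θ₁))
      * (b ^ p₁ * (lam₁ + b) * y ^ (θ₁ - 1)) := by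
    simp only [gll, hb_def]; ring_nf
  have e₃ : gll θ₂ lam₂ p₂ x = θ₂ ^ (2 + p₂) / (Real.Gamma (1 + p₂) * (1 + p₂ + lam₂ * θ₂))
      * (a ^ p₂ * (lam₂ + a) * x ^ (θ₂ - 1)) := by
    simp only [gll, ha_def]; ring_nf
  have e₄ : gll θ₂ lam₂ p₂ y = θ₂ ^ (2 + p₂) / (Real.Gamma (1 + p₂) * (1 + p₂ + lam₂ * θ₂))
      * (b ^ p₂ * (lam₂ + b) * y ^ (θ₂ - 1)) := by
    simp only [gll, hb_def]; ring_nf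
  rw [ge_iff_le, e₁, e₂, e₃, e₄]
  have hCC : 0 ≤ θ₁ ^ (2 + p₁) / (Real.Gamma (1 + p₁) * (1 + p₁ + lam₁ * θ₁)) *
      (θ₂ ^ (2 + p₂) / (Real.Gamma (1 + p₂) * (1 + p₂ + lam₂ * θ₂))) :=
    (mul_pos hC₁ hC₂).le
  calc θ₁ ^ (2 + p₁) / (Real.Gamma (1 + p₁) * (1 + p₁ + lam₁ * θ₁))
        * (b ^ p₁ * (lam₁ + b) * y ^ (θ₁ - 1)) *
      (θ₂ ^ (2 + p₂) / (Real.Gamma (1 + p₂) * (1 + p₂ + lam₂ * θ₂))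
        * (a ^ p₂ * (lam₂ + a) * x ^ (θ₂ - 1)))
      = θ₁ ^ (2 + p₁) / (Real.Gamma (1 + p₁) * (1 + p₁ + lam₁ * θ₁)) *
        (θ₂ ^ (2 + p₂) / (Real.Gamma (1 + p₂) * (1 + p₂ + lam₂ * θ₂))) *
        ((b ^ p₁ * a ^ p₂) * ((lam₁ + b) * (lam₂ + a)) * (y ^ (θ₁ - 1) * x ^ (θ₂ - 1))) := by
        ring
    _ ≤ θ₁ ^ (2 + p₁) / (Real.Gamma (1 + p₁) * (1 + p₁ + lam₁ * θ₁)) *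
        (θ₂ ^ (2 + p₂) / (Real.Gamma (1 + p₂) * (1 + p₂ + lam₂ * θ₂))) *
        ((a ^ p₁ * b ^ p₂) * ((lam₁ + a) * (lam₂ + b)) * (x ^ (θ₁ - 1) * y ^ (θ₂ - 1))) :=
        mul_le_mul_of_nonneg_left key hCC
    _ = θ₁ ^ (2 + p₁) / (Real.Gamma (1 + p₁) * (1 + p₁ + lam₁ * θ₁))
        * (a ^ p₁ * (lam₁ + a) * x ^ (θ₁ - 1)) *
      (θ₂ ^ (2 + p₂) / (Real.Gamma (1 + p₂) * (1 + p₂ + lam₂ * θ₂))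
        * (b ^ p₂ * (lam₂ + b) * y ^ (θ₂ - 1))) := by ring
end

section
/- If 0 < θ ≤ 1, p ≥ 0 and λ ≥ 0, then the GLL density f(x;θ,λ,p) is non-increasing on (0,1), and consequently the cdf F(x;θ,λ,p) is concave on (0,1). -/
/-!
Each of the factors `(-log x) ^ p`, `λ - log x` and `x ^ (θ - 1)` of the density is nonnegative and
non-increasing on `(0, 1)`, hence so is their product. A primitive of a non-increasing function has
non-increasing slopes: the slope over `[x, y]` is an average of the function there, so it lies
between its values at the endpoints.
-/

open Real MeasureTheory

open Set

namespace AntitoneOn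

variable {f : ℝ → ℝ} {s : Set ℝ}

theorem intervalIntegrable_of_mem (hf : AntitoneOn f s) (hs : s.OrdConnected) {x y : ℝ}
    (hx : x ∈ s) (hy : y ∈ s) : IntervalIntegrable f volume x y :=
  (hf.mono (hs.uIcc_subset hx hy)).intervalIntegrable

theorem intervalIntegral_le_mul_left (hf : AntitoneOn f s) (hs : s.OrdConnected) {x y : ℝ}
    (hx : x ∈ s) (hy : y ∈ s) (hxy : x ≤ y) : ∫ t in x..y, f t ≤ (y - x) * f x := by
  have := intervalIntegral.integral_mono_on hxy (hf.intervalIntegrable_of_mem hs hx hy)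
    intervalIntegrable_const fun t ht => hf hx (hs.out hx hy ht) ht.1
  simpa using this

theorem mul_right_le_intervalIntegral (hf : AntitoneOn f s) (hs : s.OrdConnected) {x y : ℝ}
    (hx : x ∈ s) (hy : y ∈ s) (hxy : x ≤ y) : (y - x) * f y ≤ ∫ t in x..y, f t := by
  have := intervalIntegral.integral_mono_on hxy intervalIntegrable_const
    (hf.intervalIntegrable_of_mem hs hx hy) fun t ht => hf (hs.out hx hy ht) hy ht.2
  simpa using this

theorem concaveOn_intervalIntegral (hf : AntitoneOn f s) (hs : s.OrdConnected) {c : ℝ}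
    (hc : c ∈ s) : ConcaveOn ℝ s (fun x => ∫ t in c..x, f t) := by
  refine concaveOn_of_slope_anti_adjacent hs.convex fun {x y z} hx hz hxy hyz => ?_
  have hy : y ∈ s := hs.out hx hz ⟨hxy.le, hyz.le⟩
  have hint : ∀ {u v}, u ∈ s → v ∈ s → IntervalIntegrable f volume u v :=
    fun hu hv => hf.intervalIntegrable_of_mem hs hu hv
  rw [intervalIntegral.integral_interval_sub_left (hint hc hz) (hint hc hy),
    intervalIntegral.integral_interval_sub_left (hint hc hy) (hint hc hx),
    div_le_div_iff₀ (by linarith) (by linarith)]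
  have hyz' := hf.intervalIntegral_le_mul_left hs hy hz hyz.le
  have hxy' := hf.mul_right_le_intervalIntegral hs hx hy hxy.le
  calc (∫ t in y..z, f t) * (y - x) ≤ (z - y) * f y * (y - x) :=
        mul_le_mul_of_nonneg_right hyz' (sub_nonneg.2 hxy.le)
    _ = (z - y) * ((y - x) * f y) := by ring
    _ ≤ (∫ t in x..y, f t) * (z - y) := by
        rw [mul_comm _ (z - y)]
        exact mul_le_mul_of_nonneg_left hxy' (sub_nonneg.2 hyz.le)

theorem concaveOn_setIntegral_Ioo {a b : ℝ} (hf : AntitoneOn f (Ioo a b)) :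
    ConcaveOn ℝ (Ioo a b) (fun x => ∫ t in Ioo a x, f t) := by
  have hs : (Ioo a b).OrdConnected := ordConnected_Ioo
  refine ConcaveOn.congr (f := fun x => ∫ t in a..x, f t) ?_ fun x hx => by
    simp only [intervalIntegral.integral_of_le hx.1.le, integral_Ioc_eq_integral_Ioo]
  by_cases h : ∃ c ∈ Ioo a b, IntervalIntegrable f volume a c
  · obtain ⟨c, hc, hac⟩ := h
    refine ((hf.concaveOn_intervalIntegral hs hc).add_const (∫ t in a..c, f t)).congr
      fun x hx => ?_
    exact (add_comm _ _).trans <| intervalIntegral.integral_add_adjacent_intervals hac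
      (hf.intervalIntegrable_of_mem hs hc hx)
  · -- `f` is not integrable near `a`, so every integral from `a` takes the junk value `0`.
    push Not at h
    exact (concaveOn_const 0 hs.convex).congr fun x hx =>
      (intervalIntegral.integral_undef (h x hx)).symm

end AntitoneOn

theorem gll_antitoneOn {θ lam p : ℝ} (hθ0 : 0 < θ) (hθ1 : θ ≤ 1) (hp : 0 ≤ p) (hlam : 0 ≤ lam) :
    AntitoneOn (gll θ lam p) (Ioo 0 1) := by
  rintro x ⟨hx0, -⟩ y ⟨hy0, hy1⟩ hxy
  have hlogy : log y < 0 := log_neg hy0 hy1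
  have hlog : log x ≤ log y := log_le_log hx0 hxy
  have hC : 0 ≤ θ ^ (2 + p) / (Gamma (1 + p) * (1 + p + lam * θ)) := by
    have := Gamma_pos_of_pos (show 0 < 1 + p by linarith)
    positivity
  have hpow : (-log y) ^ p ≤ (-log x) ^ p := rpow_le_rpow (by linarith) (by linarith) hp
  have hpow0 : 0 ≤ (-log x) ^ p := rpow_nonneg (by linarith) p
  have hlin : lam - log y ≤ lam - log x := by linarith
  have hxθ : y ^ (θ - 1) ≤ x ^ (θ - 1) := rpow_le_rpow_of_nonpos hx0 hxy (by linarith)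
  unfold gll
  gcongr
  · exact mul_nonneg (mul_nonneg hC hpow0) (by linarith)
  · linarith

theorem gll_cdf_concave (θ lam p : ℝ) (hθ0 : 0 < θ) (hθ1 : θ ≤ 1) (hp : 0 ≤ p)
    (hlam : 0 ≤ lam) :
    AntitoneOn (gll θ lam p) (Set.Ioo 0 1) ∧
      ConcaveOn ℝ (Set.Ioo 0 1) (fun x => ∫ t in Set.Ioo (0:ℝ) x, gll θ lam p t) :=
  have hanti := gll_antitoneOn hθ0 hθ1 hp hlam
  ⟨hanti, hanti.concaveOn_setIntegral_Ioo⟩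
end

section
/- For any θ > 1, p > 0, λ > 0, the GLL cdf F(x;θ,λ,p) is neither convex nor concave on (0,1): there exist points x where F''(x) < 0 and points where F''(x) > 0. -/
open Real MeasureTheory

/-!
With `u = -log x`, the derivative of the density at `x` is a positive multiple of
`(θ - 1) u (λ + u) - p (λ + u) - u`, which is `-p λ < 0` at `u = 0` and positive for large `u`.
Since `θ > 1` the density tends to `0` at `0⁺`, so it is continuous on `[0, 1)` and is the
derivative of the cdf there; a convex (concave) cdf would thus have a monotone (antitone)
density.
-/

open Filter Set Topology

section ConvexDeriv

variable {F f : ℝ → ℝ} {s : Set ℝ}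

theorem not_convexOn_of_hasDerivAt_of_deriv_neg (hs : IsOpen s)
    (hF : ∀ x ∈ s, HasDerivAt F (f x) x) {x : ℝ} (hx : x ∈ s) (hfx : deriv f x < 0) :
    ¬ ConvexOn ℝ s F := by
  intro hconv
  have hmono : MonotoneOn f s := by
    intro a ha b hb hab
    simpa only [(hF a ha).deriv, (hF b hb).deriv] using
      hconv.monotoneOn_deriv (fun y hy => (hF y hy).differentiableAt) ha hb hab
  have := hmono.derivWithin_nonneg (x := x)
  rw [derivWithin_of_isOpen hs hx] at this
  linarith

theorem not_concaveOn_of_hasDerivAt_of_deriv_pos (hs : IsOpen s)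
    (hF : ∀ x ∈ s, HasDerivAt F (f x) x) {x : ℝ} (hx : x ∈ s) (hfx : 0 < deriv f x) :
    ¬ ConcaveOn ℝ s F := by
  intro hconc
  refine not_convexOn_of_hasDerivAt_of_deriv_neg (F := -F) (f := -f) hs
    (fun y hy => (hF y hy).neg) hx ?_ hconc.neg
  rw [deriv.neg']
  linarith

end ConvexDeriv

noncomputable def gllConst (θ lam p : ℝ) : ℝ :=
  θ ^ (2 + p) / (Real.Gamma (1 + p) * (1 + p + lam * θ))

theorem gll_def (θ lam p x : ℝ) :
    gll θ lam p x = gllConst θ lam p * (-log x) ^ p * (lam - log x) * x ^ (θ - 1) := rfl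

theorem gllConst_pos {θ lam p : ℝ} (hθ : 0 < θ) (hp : -1 < p) (hlam : 0 ≤ lam) :
    0 < gllConst θ lam p := by
  have : 0 < 1 + p + lam * θ := by nlinarith
  unfold gllConst
  have := Gamma_pos_of_pos (show 0 < 1 + p by linarith)
  positivity

theorem gll_zero (θ lam : ℝ) {p : ℝ} (hp : p ≠ 0) : gll θ lam p 0 = 0 := by
  simp [gll_def, zero_rpow hp]

theorem tendsto_gll_nhdsGT_zero {θ : ℝ} (lam p : ℝ) (hθ : 1 < θ) :
    Tendsto (gll θ lam p) (𝓝[>] 0) (𝓝 0) := by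
  have hc : 0 < θ - 1 := by linarith
  have hG : Tendsto (fun u => u ^ p * (lam + u) * exp (-(θ - 1) * u)) atTop (𝓝 0) := by
    have := ((tendsto_rpow_mul_exp_neg_mul_atTop_nhds_zero p _ hc).const_mul lam).add
      (tendsto_rpow_mul_exp_neg_mul_atTop_nhds_zero (p + 1) _ hc)
    rw [mul_zero, add_zero] at this
    refine this.congr' ?_
    filter_upwards [eventually_gt_atTop 0] with u hu
    rw [rpow_add_one hu.ne']
    ring
  have hlog : Tendsto (fun x => -log x) (𝓝[>] 0) atTop :=
    tendsto_neg_atBot_atTop.comp tendsto_log_nhdsGT_zero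
  have := (hG.comp hlog).const_mul (gllConst θ lam p)
  rw [mul_zero] at this
  refine this.congr' ?_
  filter_upwards [self_mem_nhdsWithin] with x (hx : 0 < x)
  rw [gll_def, Function.comp_apply, rpow_def_of_pos hx]
  ring_nf

theorem continuousOn_gll {θ : ℝ} (lam : ℝ) {p : ℝ} (hθ : 1 < θ) (hp : 0 < p) :
    ContinuousOn (gll θ lam p) (Ici 0) := by
  intro x hx
  rcases (mem_Ici.mp hx).eq_or_lt with rfl | hx0
  · rw [← continuousWithinAt_Ioi_iff_Ici, ContinuousWithinAt, gll_zero θ lam hp.ne']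
    exact tendsto_gll_nhdsGT_zero lam p hθ
  · refine ContinuousAt.continuousWithinAt ?_
    have hlog : ContinuousAt log x := continuousAt_log hx0.ne'
    exact ((continuousAt_const.mul (hlog.neg.rpow_const (Or.inr hp.le))).mul
      (continuousAt_const.sub hlog)).mul (continuousAt_id.rpow_const (Or.inl hx0.ne'))

theorem hasDerivAt_integral_Ioo_gll {θ : ℝ} (lam : ℝ) {p a : ℝ} (hθ : 1 < θ) (hp : 0 < p)
    (ha : 0 < a) :
    HasDerivAt (fun x => ∫ t in Ioo (0:ℝ) x, gll θ lam p t) (gll θ lam p a) a := by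
  have hcont := continuousOn_gll lam hθ hp
  have hint : IntervalIntegrable (gll θ lam p) volume 0 a :=
    (hcont.mono (by simp [uIcc_of_le ha.le, Icc_subset_Ici_self])).intervalIntegrable
  have hderiv := intervalIntegral.integral_hasDerivAt_right hint
    ((hcont.mono Ioi_subset_Ici_self).stronglyMeasurableAtFilter isOpen_Ioi a ha)
    (hcont.continuousAt (Ici_mem_nhds ha))
  refine hderiv.congr_of_eventuallyEq ?_
  filter_upwards [Ioi_mem_nhds ha] with x hx
  rw [intervalIntegral.integral_of_le (le_of_lt hx), integral_Ioc_eq_integral_Ioo]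

theorem hasDerivAt_gll (θ lam p : ℝ) {x : ℝ} (hx0 : 0 < x) (hx1 : x < 1) :
    HasDerivAt (gll θ lam p)
      (gllConst θ lam p * x ^ (θ - 2) * (-log x) ^ (p - 1) *
        ((θ - 1) * (-log x) * (lam - log x) - p * (lam - log x) - (-log x))) x := by
  have hu : 0 < -log x := neg_pos.mpr (log_neg hx0 hx1)
  have hlog : HasDerivAt log x⁻¹ x := hasDerivAt_log hx0.ne'
  have hpow := ((hasDerivAt_rpow_const (p := p) (Or.inl hu.ne')).comp x hlog.neg).const_mul
    (gllConst θ lam p)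
  have := (hpow.mul ((hasDerivAt_const x lam).sub hlog)).mul
    (hasDerivAt_rpow_const (p := θ - 1) (Or.inl hx0.ne'))
  rw [show gll θ lam p = _ from funext (gll_def θ lam p)]
  refine this.congr_deriv ?_
  simp only [Pi.mul_apply, Pi.sub_apply, Pi.neg_apply, Function.comp_apply]
  rw [show θ - 2 = θ - 1 - 1 by ring, show (-log x) ^ p = (-log x) ^ (p - 1) * -log x by
    rw [← rpow_add_one hu.ne', sub_add_cancel],
    show x ^ (θ - 1) = x ^ (θ - 1 - 1) * x by rw [← rpow_add_one hx0.ne', sub_add_cancel]]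
  field_simp
  ring

theorem exp_neg_mem_Ioo {u : ℝ} (hu : 0 < u) : exp (-u) ∈ Ioo (0:ℝ) 1 :=
  ⟨exp_pos _, exp_lt_one_iff.mpr (neg_lt_zero.mpr hu)⟩

/-- The factor of `deriv (gll θ lam p) x` that carries its sign, in the variable `u = -log x`. -/
def gllSlopeFactor (θ lam p u : ℝ) : ℝ := (θ - 1) * u * (lam + u) - p * (lam + u) - u

theorem deriv_gll_exp_neg (θ lam p : ℝ) {u : ℝ} (hu : 0 < u) :
    deriv (gll θ lam p) (exp (-u)) =
      gllConst θ lam p * exp (-u) ^ (θ - 2) * u ^ (p - 1) * gllSlopeFactor θ lam p u := by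
  have := hasDerivAt_gll θ lam p (exp_neg_mem_Ioo hu).1 (exp_neg_mem_Ioo hu).2
  rw [this.deriv, log_exp, neg_neg, gllSlopeFactor, sub_neg_eq_add]

theorem exists_gllSlopeFactor_neg (θ : ℝ) {lam p : ℝ} (hp : 0 < p) (hlam : 0 < lam) :
    ∃ u > 0, gllSlopeFactor θ lam p u < 0 := by
  have hcont : Continuous (gllSlopeFactor θ lam p) := by
    unfold gllSlopeFactor; fun_prop
  have hzero : gllSlopeFactor θ lam p 0 < 0 := by
    simp only [gllSlopeFactor]; nlinarith
  have := (hcont.tendsto 0).eventually (gt_mem_nhds hzero)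
  obtain ⟨u, hu, hpos⟩ :=
    ((this.filter_mono nhdsWithin_le_nhds).and (self_mem_nhdsWithin : Ioi (0:ℝ) ∈ 𝓝[>] 0)).exists
  exact ⟨u, hpos, hu⟩

theorem exists_gllSlopeFactor_pos {θ lam p : ℝ} (hθ : 1 < θ) (hp : -2 < p) (hlam : 0 ≤ lam) :
    ∃ u > 0, 0 < gllSlopeFactor θ lam p u := by
  -- where `(θ - 1) * u = p + 2` the factor equals `2 * lam + u`
  have hθ1 : 0 < θ - 1 := by linarith
  refine ⟨(p + 2) / (θ - 1), div_pos (by linarith) hθ1, ?_⟩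
  have : (θ - 1) * ((p + 2) / (θ - 1)) = p + 2 := mul_div_cancel₀ _ hθ1.ne'
  rw [gllSlopeFactor, this]
  nlinarith [div_pos (show 0 < p + 2 by linarith) hθ1]

theorem exists_deriv_gll_neg {θ lam p : ℝ} (hθ : 0 < θ) (hp : 0 < p) (hlam : 0 < lam) :
    ∃ x ∈ Ioo (0:ℝ) 1, deriv (gll θ lam p) x < 0 := by
  obtain ⟨u, hu, hq⟩ := exists_gllSlopeFactor_neg θ hp hlam
  have hC := gllConst_pos hθ (by linarith : -1 < p) hlam.le
  refine ⟨exp (-u), exp_neg_mem_Ioo hu, ?_⟩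
  rw [deriv_gll_exp_neg θ lam p hu]
  exact mul_neg_of_pos_of_neg (by positivity) hq

theorem exists_deriv_gll_pos {θ lam p : ℝ} (hθ : 1 < θ) (hp : -1 < p) (hlam : 0 ≤ lam) :
    ∃ y ∈ Ioo (0:ℝ) 1, 0 < deriv (gll θ lam p) y := by
  obtain ⟨u, hu, hq⟩ := exists_gllSlopeFactor_pos hθ (by linarith : -2 < p) hlam
  have hC := gllConst_pos (zero_lt_one.trans hθ) hp hlam
  refine ⟨exp (-u), exp_neg_mem_Ioo hu, ?_⟩
  rw [deriv_gll_exp_neg θ lam p hu]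
  exact mul_pos (by positivity) hq

theorem gll_cdf_neither_convex_nor_concave (θ lam p : ℝ)
    (hθ : 1 < θ) (hp : 0 < p) (hlam : 0 < lam) :
    ¬ ConvexOn ℝ (Set.Ioo 0 1) (fun x => ∫ t in Set.Ioo (0:ℝ) x, gll θ lam p t) ∧
    ¬ ConcaveOn ℝ (Set.Ioo 0 1) (fun x => ∫ t in Set.Ioo (0:ℝ) x, gll θ lam p t) ∧
    (∃ x ∈ Set.Ioo (0:ℝ) 1, deriv (gll θ lam p) x < 0) ∧
    (∃ y ∈ Set.Ioo (0:ℝ) 1, 0 < deriv (gll θ lam p) y) := by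
  have hcdf : ∀ a ∈ Ioo (0:ℝ) 1,
      HasDerivAt (fun x => ∫ t in Ioo (0:ℝ) x, gll θ lam p t) (gll θ lam p a) a :=
    fun a ha => hasDerivAt_integral_Ioo_gll lam hθ hp ha.1
  obtain ⟨x, hx, hdx⟩ := exists_deriv_gll_neg (zero_lt_one.trans hθ) hp hlam
  obtain ⟨y, hy, hdy⟩ := exists_deriv_gll_pos hθ (neg_one_lt_zero.trans hp) hlam.le
  exact ⟨not_convexOn_of_hasDerivAt_of_deriv_neg isOpen_Ioo hcdf hx hdx,
    not_concaveOn_of_hasDerivAt_of_deriv_pos isOpen_Ioo hcdf hy hdy, ⟨x, hx, hdx⟩, ⟨y, hy, hdy⟩⟩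
end

section
/- For any integer p ≥ 0, θ > 0, λ ≥ 0 and x ∈ (0,1), the GLL cdf satisfies F(x;θ,λ,p) = x^θ·[1 + Σ_{k=1}^{p} (−θ log x)^k/k! + (−θ log x)^(1+p)/((1+p+λθ)·p!)] > x^θ. -/
/-! With `u = -θ log t`, the bracket is the truncated exponential series `E_p(u)` plus
`u ^ (p + 1) / ((1 + p + λθ) p!)`. Since `E_p' = E_p - u ^ p / p!`, differentiating `t ^ θ` times
the bracket kills `E_p` and leaves `θ t ^ (θ - 1) u ^ p (λθ + u) / ((1 + p + λθ) p!)`, which is the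
density. The antiderivative tends to `0` at `0⁺` because `t ^ θ` beats every power of `log t`, and
the density is nonnegative on `(0, 1]`, hence integrable there, so the fundamental theorem of
calculus applies on `[0, x]`. For `x < 1` we have `u > 0`, so the bracket exceeds `1`. -/

open Real MeasureTheory

open Filter Set Topology
open scoped Nat

theorem hasDerivAt_sum_range_pow_div_factorial (p : ℕ) (u : ℝ) :
    HasDerivAt (fun u : ℝ => ∑ k ∈ Finset.range (p + 1), u ^ k / k !)
      (∑ k ∈ Finset.range p, u ^ k / k !) u := by
  induction p with
  | zero => simpa using hasDerivAt_const u (1 : ℝ)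
  | succ p ih =>
    simp_rw [Finset.sum_range_succ _ (p + 1)]
    refine (ih.add ((hasDerivAt_pow (p + 1) u).div_const ((p + 1)! : ℝ))).congr_deriv ?_
    rw [Finset.sum_range_succ, Nat.factorial_succ]
    push_cast
    field_simp

theorem Finset.sum_range_succ_eq_add_sum_Icc {M : Type*} [AddCommMonoid M] (p : ℕ) (f : ℕ → M) :
    ∑ k ∈ Finset.range (p + 1), f k = f 0 + ∑ k ∈ Finset.Icc 1 p, f k := by
  rw [Finset.range_eq_Ico, Finset.sum_eq_sum_Ico_succ_bot (Nat.succ_pos p)]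
  rfl

theorem gll_natCast (θ lam t : ℝ) (p : ℕ) :
    gll θ lam p t = θ ^ (p + 2) / (p ! * (1 + p + lam * θ)) *
      (-log t) ^ p * (lam - log t) * t ^ (θ - 1) := by
  rw [gll, add_comm (2 : ℝ), add_comm (1 : ℝ), ← Nat.cast_ofNat, ← Nat.cast_add, rpow_natCast,
    rpow_natCast, Gamma_nat_eq_factorial]

noncomputable def gllCdf (θ lam : ℝ) (p : ℕ) (t : ℝ) : ℝ :=
  t ^ θ * (∑ k ∈ Finset.range (p + 1), (-(θ * log t)) ^ k / k ! +
    (-(θ * log t)) ^ (p + 1) / ((1 + p + lam * θ) * p !))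

theorem hasDerivAt_gllCdf {θ lam t : ℝ} (p : ℕ) (hc : 1 + p + lam * θ ≠ 0) (ht : 0 < t) :
    HasDerivAt (gllCdf θ lam p) (gll θ lam p t) t := by
  have hu : HasDerivAt (fun s => -(θ * log s)) (-(θ * t⁻¹)) t :=
    ((hasDerivAt_log ht.ne').const_mul θ).neg
  have hE := (hasDerivAt_sum_range_pow_div_factorial p _).comp t hu
  have hP := (hu.pow (p + 1)).div_const ((1 + p + lam * θ) * p !)
  have hr : HasDerivAt (fun s : ℝ => s ^ θ) (θ * t ^ (θ - 1)) t := by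
    simpa using hasDerivAt_rpow_const (x := t) (p := θ) (Or.inl ht.ne')
  refine (hr.mul (hE.add hP)).congr_deriv ?_
  have hts : t ^ θ = t ^ (θ - 1) * t := by
    rw [← rpow_add_one ht.ne' (θ - 1), sub_add_cancel]
  simp only [Function.comp_apply, Pi.add_apply, Pi.pow_apply, Finset.sum_range_succ,
    Nat.add_sub_cancel]
  rw [gll_natCast, hts]
  have ht0 := ht.ne'
  have hc' : 1 + p + θ * lam ≠ 0 := by rwa [mul_comm]
  push_cast
  field_simp
  ring

theorem tendsto_rpow_mul_neg_log_pow_nhdsGT_zero {θ : ℝ} (hθ : 0 < θ) (c : ℝ) (k : ℕ) :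
    Tendsto (fun t : ℝ => t ^ θ * (-(c * log t)) ^ k) (𝓝[>] 0) (𝓝 0) := by
  have h := ((isLittleO_abs_log_rpow_rpow_nhdsGT_zero k (neg_lt_zero.2 hθ)).tendsto_div_nhds_zero
    ).const_mul (|c| ^ k)
  rw [mul_zero] at h
  refine tendsto_zero_iff_norm_tendsto_zero.2 (h.congr' ?_)
  filter_upwards [self_mem_nhdsWithin] with t (ht : 0 < t)
  rw [rpow_natCast, rpow_neg ht.le, div_inv_eq_mul, norm_mul, norm_pow, Real.norm_eq_abs,
    Real.norm_eq_abs, abs_neg, abs_mul, abs_of_pos (rpow_pos_of_pos ht θ)]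
  ring

theorem tendsto_gllCdf_nhdsGT_zero {θ : ℝ} (lam : ℝ) (p : ℕ) (hθ : 0 < θ) :
    Tendsto (gllCdf θ lam p) (𝓝[>] 0) (𝓝 0) := by
  have hsum := tendsto_finsetSum (Finset.range (p + 1)) fun k _ =>
    (tendsto_rpow_mul_neg_log_pow_nhdsGT_zero hθ θ k).div_const (k ! : ℝ)
  have hlast := (tendsto_rpow_mul_neg_log_pow_nhdsGT_zero hθ θ (p + 1)).div_const
    ((1 + p + lam * θ) * p !)
  simp only [zero_div, Finset.sum_const_zero] at hsum hlast
  have htotal := hsum.add hlast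
  rw [add_zero] at htotal
  refine htotal.congr fun t => ?_
  simp only [gllCdf, mul_add, Finset.mul_sum, mul_div_assoc]

theorem continuousOn_gllCdf {θ lam : ℝ} (p : ℕ) (hθ : 0 < θ) (hc : 1 + p + lam * θ ≠ 0) :
    ContinuousOn (gllCdf θ lam p) (Ici 0) := by
  intro t ht
  rcases (mem_Ici.1 ht).eq_or_lt with rfl | ht
  · have h0 : gllCdf θ lam p 0 = 0 := by simp [gllCdf, zero_rpow hθ.ne']
    rw [← continuousWithinAt_Ioi_iff_Ici, ContinuousWithinAt, h0]
    exact tendsto_gllCdf_nhdsGT_zero lam p hθ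
  · exact (hasDerivAt_gllCdf p hc ht).continuousAt.continuousWithinAt

theorem gll_nonneg {θ lam t : ℝ} (p : ℕ) (hθ : 0 ≤ θ) (hlam : 0 ≤ lam) (ht0 : 0 < t)
    (ht1 : t ≤ 1) : 0 ≤ gll θ lam p t := by
  have hlog : 0 ≤ -log t := neg_nonneg.2 (log_nonpos ht0.le ht1)
  rw [gll_natCast]
  have hrpow := rpow_pos_of_pos ht0 (θ - 1)
  have hlam_log : 0 ≤ lam - log t := by linarith
  positivity

theorem integral_Ioo_gll_eq_gllCdf {θ lam x : ℝ} (p : ℕ) (hθ : 0 < θ) (hlam : 0 ≤ lam)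
    (hx0 : 0 ≤ x) (hx1 : x ≤ 1) :
    ∫ t in Ioo 0 x, gll θ lam p t = gllCdf θ lam p x := by
  have hc : 1 + p + lam * θ ≠ 0 := by positivity
  have hcont : ContinuousOn (gllCdf θ lam p) (Icc 0 x) :=
    (continuousOn_gllCdf p hθ hc).mono Icc_subset_Ici_self
  have hderiv : ∀ t ∈ Ioo 0 x, HasDerivAt (gllCdf θ lam p) (gll θ lam p t) t :=
    fun t ht => hasDerivAt_gllCdf p hc ht.1
  have hint := intervalIntegral.integrableOn_deriv_of_nonneg hcont hderiv
    fun t ht => gll_nonneg p hθ.le hlam ht.1 (ht.2.le.trans hx1)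
  rw [← integral_Ioc_eq_integral_Ioo, ← intervalIntegral.integral_of_le hx0,
    intervalIntegral.integral_eq_sub_of_hasDerivAt_of_le hx0 hcont hderiv
      ((intervalIntegrable_iff_integrableOn_Ioc_of_le hx0).2 hint)]
  simp [gllCdf, zero_rpow hθ.ne']

theorem rpow_lt_gllCdf {θ lam x : ℝ} (p : ℕ) (hθ : 0 < θ) (hc : 0 < 1 + p + lam * θ)
    (hx0 : 0 < x) (hx1 : x < 1) : x ^ θ < gllCdf θ lam p x := by
  have hu : 0 < -(θ * log x) := neg_pos.2 (mul_neg_of_pos_of_neg hθ (log_neg hx0 hx1))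
  have hsum : 1 ≤ ∑ k ∈ Finset.range (p + 1), (-(θ * log x)) ^ k / k ! := by
    simpa using Finset.single_le_sum (f := fun k => (-(θ * log x)) ^ k / k !)
      (fun k _ => by positivity) (Finset.mem_range.2 p.succ_pos)
  have hlast : 0 < (-(θ * log x)) ^ (p + 1) / ((1 + p + lam * θ) * p !) := by positivity
  calc x ^ θ = x ^ θ * 1 := (mul_one _).symm
    _ < gllCdf θ lam p x := mul_lt_mul_of_pos_left (by linarith) (rpow_pos_of_pos hx0 θ)

theorem gll_cdf_integer_p_gt (θ lam : ℝ) (p : ℕ) (hθ : 0 < θ) (hlam : 0 ≤ lam)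
    (x : ℝ) (hx : x ∈ Set.Ioo (0:ℝ) 1) :
    (∫ t in Set.Ioo (0:ℝ) x, gll θ lam (p : ℝ) t) =
      x ^ θ * (1 + (∑ k ∈ Finset.Icc 1 p, (-(θ * Real.log x)) ^ k / (Nat.factorial k : ℝ)) +
        (-(θ * Real.log x)) ^ (1 + p) / ((1 + (p : ℝ) + lam * θ) * (Nat.factorial p : ℝ))) ∧
    x ^ θ < ∫ t in Set.Ioo (0:ℝ) x, gll θ lam (p : ℝ) t := by
  obtain ⟨hx0, hx1⟩ := hx
  rw [integral_Ioo_gll_eq_gllCdf p hθ hlam hx0.le hx1.le]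
  refine ⟨?_, rpow_lt_gllCdf p hθ (by positivity) hx0 hx1⟩
  rw [gllCdf, Finset.sum_range_succ_eq_add_sum_Icc, add_comm p 1]
  simp only [pow_zero, Nat.factorial_zero, Nat.cast_one, div_one]
end
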